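/- Let f_1,…,f_n : ℝ^d → ℝ be L-smooth, let W ∈ ℝ^{n×n} be doubly stochastic, let X ∈ ℝ^{d×n} with columns x_1,…,x_n, and let x̄ := (1/n)∑_i x_i. Then ‖∂f(x̄)W − ∂̄f(x̄)‖_F² ≤ 2‖∂f(X)W − ∂̄f(X)‖_F² + 2L²‖X − X̄‖_F², where ∂f(x̄) is the matrix whose i-th column is ∇f_i(x̄), ∂f(X) is the matrix whose i-th column is ∇f_i(x_i), bars over gradient matrices denote column-mean matrices, and X̄ is the column-mean matrix of X. -/

import Mathlib

/-- A matrix is doubly stochastic if all its entries are nonnegative and each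
row and each column sums to 1. -/
def DoublyStochastic {n : ℕ} (W : Matrix (Fin n) (Fin n) ℝ) : Prop :=
  (∀ i j, 0 ≤ W i j) ∧ (∀ i, ∑ j, W i j = 1) ∧ (∀ j, ∑ i, W i j = 1)

/-- The column-mean matrix `X̄ := X·(1/n)𝟙𝟙ᵀ` of `X ∈ ℝ^{d×n}`. -/
noncomputable def colMean {d n : ℕ} (X : Matrix (Fin d) (Fin n) ℝ) :
    Matrix (Fin d) (Fin n) ℝ :=
  X * ((n : ℝ)⁻¹ • Matrix.of fun _ _ => (1 : ℝ))

/-- The squared Frobenius norm `‖M‖_F²` of a matrix. -/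
def frobSq {d n : ℕ} (M : Matrix (Fin d) (Fin n) ℝ) : ℝ := ∑ i, ∑ j, (M i j) ^ 2

/-- The matrix `∂f(x) ∈ ℝ^{d×n}` whose `i`-th column is `∇f_i(x)`. -/
noncomputable def gradMatAt {d n : ℕ} (f : Fin n → EuclideanSpace ℝ (Fin d) → ℝ)
    (x : EuclideanSpace ℝ (Fin d)) : Matrix (Fin d) (Fin n) ℝ :=
  Matrix.of fun a i => gradient (f i) x a

/-- The matrix `∂f(X) ∈ ℝ^{d×n}` whose `i`-th column is `∇f_i(x_i)`, where
`x_i` is the `i`-th column of `X`. -/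
noncomputable def gradMat {d n : ℕ} (f : Fin n → EuclideanSpace ℝ (Fin d) → ℝ)
    (X : Matrix (Fin d) (Fin n) ℝ) : Matrix (Fin d) (Fin n) ℝ :=
  Matrix.of fun a i => gradient (f i) (WithLp.toLp 2 (fun b => X b i) : EuclideanSpace ℝ (Fin d)) a


lemma colMean_apply {d n : ℕ} (M : Matrix (Fin d) (Fin n) ℝ) (a : Fin d) (j : Fin n) :
    colMean M a j = (n : ℝ)⁻¹ * ∑ k, M a k := by
  show ∑ k, M a k * ((n : ℝ)⁻¹ • Matrix.of fun _ _ => (1 : ℝ)) k j = _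
  simp [← Finset.sum_mul, mul_comm]

lemma sum_sq_center_le {n : ℕ} (m : Fin n → ℝ) :
    ∑ j, (m j - (n : ℝ)⁻¹ * ∑ k, m k) ^ 2 ≤ ∑ j, (m j) ^ 2 := by
  rcases Nat.eq_zero_or_pos n with h | h
  · subst h; simp
  have hn : (0:ℝ) < n := by exact_mod_cast h
  set S := ∑ k, m k with hS
  have expand : ∑ j, (m j - (n : ℝ)⁻¹ * S) ^ 2
      = ∑ j, (m j) ^ 2 - 2 * ((n:ℝ)⁻¹ * S) * S + n * ((n:ℝ)⁻¹ * S)^2 := by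
    simp only [sub_sq, Finset.sum_add_distrib, Finset.sum_sub_distrib,
      ← Finset.sum_mul, ← hS, Finset.sum_const, Finset.card_fin, nsmul_eq_mul]
    rw [show (∑ x : Fin n, 2 * m x) = 2 * S by rw [← Finset.mul_sum, hS]]
    ring
  rw [expand]
  have : 2 * ((n:ℝ)⁻¹ * S) * S - (n:ℝ) * ((n:ℝ)⁻¹ * S)^2 = S^2 / n := by
    field_simp; ring
  nlinarith [div_nonneg (sq_nonneg S) hn.le]

lemma frobSq_center_le {d n : ℕ} (M : Matrix (Fin d) (Fin n) ℝ) :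
    frobSq (M - colMean M) ≤ frobSq M := by
  unfold frobSq
  apply Finset.sum_le_sum
  intro a _
  simpa [Matrix.sub_apply, colMean_apply] using sum_sq_center_le (fun j => M a j)

lemma frobSq_mul_ds {d n : ℕ} (N : Matrix (Fin d) (Fin n) ℝ)
    (W : Matrix (Fin n) (Fin n) ℝ) (hW : DoublyStochastic W) :
    frobSq (N * W) ≤ frobSq N := by
  obtain ⟨hpos, hrow, hcol⟩ := hW
  unfold frobSq
  have key : ∀ a j, ((N * W) a j) ^ 2 ≤ ∑ i, (N a i) ^ 2 * W i j := by
    intro a j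
    rw [Matrix.mul_apply]
    have h := Finset.sum_mul_sq_le_sq_mul_sq Finset.univ
      (fun i => N a i * Real.sqrt (W i j)) (fun i => Real.sqrt (W i j))
    have e1 : ∀ i : Fin n, (N a i * Real.sqrt (W i j)) * Real.sqrt (W i j)
        = N a i * W i j := by
      intro i
      rw [mul_assoc, Real.mul_self_sqrt (hpos i j)]
    have e2 : ∀ i : Fin n, (N a i * Real.sqrt (W i j)) ^ 2 = (N a i)^2 * W i j := by
      intro i
      rw [mul_pow, Real.sq_sqrt (hpos i j)]
    have e3 : ∀ i : Fin n, (Real.sqrt (W i j)) ^ 2 = W i j := fun i => Real.sq_sqrt (hpos i j)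
    simp only [e1, e2, e3] at h
    rw [hcol j, mul_one] at h
    exact h
  calc ∑ a, ∑ j, ((N * W) a j) ^ 2
      ≤ ∑ a, ∑ j, ∑ i, (N a i) ^ 2 * W i j :=
        Finset.sum_le_sum fun a _ => Finset.sum_le_sum fun j _ => key a j
    _ = ∑ a, ∑ i, (N a i) ^ 2 := by
        refine Finset.sum_congr rfl fun a _ => ?_
        rw [Finset.sum_comm]
        refine Finset.sum_congr rfl fun i _ => ?_
        rw [← Finset.mul_sum, hrow i, mul_one]

lemma frobSq_add_le {d n : ℕ} (P Q : Matrix (Fin d) (Fin n) ℝ) :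
    frobSq (P + Q) ≤ 2 * frobSq P + 2 * frobSq Q := by
  unfold frobSq
  rw [Finset.mul_sum, Finset.mul_sum, ← Finset.sum_add_distrib]
  apply Finset.sum_le_sum
  intro a _
  rw [Finset.mul_sum, Finset.mul_sum, ← Finset.sum_add_distrib]
  apply Finset.sum_le_sum
  intro j _
  simp only [Matrix.add_apply]
  nlinarith [sq_nonneg (P a j - Q a j)]

/-- Use of local `X`: for `L`-smooth local objectives, doubly stochastic `W`
and `x̄` the average of the columns of `X`,
`‖∂f(x̄)W − ∂̄f(x̄)‖_F² ≤ 2‖∂f(X)W − ∂̄f(X)‖_F² + 2L²‖X − X̄‖_F²`. -/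
theorem local_gme_bound
    (d n : ℕ) (L : ℝ) (f : Fin n → EuclideanSpace ℝ (Fin d) → ℝ)
    (hdiff : ∀ i, Differentiable ℝ (f i))
    (hL : ∀ i x y, ‖gradient (f i) x - gradient (f i) y‖ ≤ L * ‖x - y‖)
    (W : Matrix (Fin n) (Fin n) ℝ) (hW : DoublyStochastic W)
    (X : Matrix (Fin d) (Fin n) ℝ)
    (xbar : EuclideanSpace ℝ (Fin d))
    (hxbar : xbar = (n : ℝ)⁻¹ • ∑ i, (WithLp.toLp 2 (fun b => X b i) : EuclideanSpace ℝ (Fin d))) :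
    frobSq (gradMatAt f xbar * W - colMean (gradMatAt f xbar))
      ≤ 2 * frobSq (gradMat f X * W - colMean (gradMat f X))
        + 2 * L ^ 2 * frobSq (X - colMean X) := by
  set A := gradMatAt f xbar with hA
  set B := gradMat f X with hB
  set J : Matrix (Fin n) (Fin n) ℝ := (n : ℝ)⁻¹ • Matrix.of fun _ _ => (1 : ℝ) with hJ
  have hcolMean : ∀ (M : Matrix (Fin d) (Fin n) ℝ), colMean M = M * J := fun M => rfl
  have hJW : J * W = J := by
    ext i j
    simp [hJ, Matrix.mul_apply, ← Finset.mul_sum, hW.2.2 j]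
  -- key algebraic identity
  have key : A * W - colMean A = (B * W - colMean B) + ((A - B) - colMean (A - B)) * W := by
    simp only [hcolMean]
    rw [Matrix.sub_mul ((A - B)) ((A-B)*J), Matrix.mul_assoc, hJW, Matrix.sub_mul A B,
      Matrix.sub_mul A B]
    abel
  rw [key]
  have h1 := frobSq_add_le (B * W - colMean B) (((A - B) - colMean (A - B)) * W)
  have h2 := frobSq_mul_ds ((A - B) - colMean (A - B)) W hW
  have h3 := frobSq_center_le (A - B)
  -- smoothness bound
  have h4 : frobSq (A - B) ≤ L ^ 2 * frobSq (X - colMean X) := by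
    unfold frobSq
    have hR : L ^ 2 * (∑ a, ∑ j, (X - colMean X) a j ^ 2)
        = ∑ j, L ^ 2 * ∑ a, (X - colMean X) a j ^ 2 := by
      rw [Finset.sum_comm, Finset.mul_sum]
    rw [Finset.sum_comm, hR]
    apply Finset.sum_le_sum
    intro i _
    set xi : EuclideanSpace ℝ (Fin d) := WithLp.toLp 2 (fun b => X b i) with hxidef
    have hxi : ∀ a, xbar a - X a i = -((X - colMean X) a i) := by
      intro a
      rw [hxbar]
      simp [Matrix.sub_apply, colMean_apply, Finset.sum_apply]
    have hnorm : ∑ a, (A a i - B a i) ^ 2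
        = ‖gradient (f i) xbar - gradient (f i) xi‖ ^ 2 := by
      rw [EuclideanSpace.norm_eq, Real.sq_sqrt (by positivity)]
      refine Finset.sum_congr rfl fun a _ => ?_
      simp [hA, hB, gradMatAt, gradMat, hxidef]
    have hx : ‖xbar - xi‖ ^ 2
        = ∑ a, ((X - colMean X) a i) ^ 2 := by
      rw [EuclideanSpace.norm_eq, Real.sq_sqrt (by positivity)]
      refine Finset.sum_congr rfl fun a _ => ?_
      have : (xbar - xi) a = xbar a - X a i := by simp [hxidef]
      rw [this, hxi a, Real.norm_eq_abs, sq_abs, neg_sq]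
    have hle := hL i xbar xi
    have hsq : ‖gradient (f i) xbar - gradient (f i) xi‖ ^ 2
        ≤ (L * ‖xbar - xi‖) ^ 2 :=
      pow_le_pow_left₀ (norm_nonneg _) hle 2
    simp only [Matrix.sub_apply]
    rw [hnorm]
    calc _ ≤ (L * ‖xbar - xi‖) ^ 2 := hsq
      _ = L ^ 2 * ∑ a, ((X - colMean X) a i) ^ 2 := by rw [mul_pow, hx]
  linarith
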